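/- If rank(S^T A P) = n_c, then 1 − λ_min^+( S M̃_s^{-1} S^T A Π_A ) ≥ σ_TL, where σ_TL = λ_min^+( S M̃_s^{-1} S^T A (I − Π_A) ). -/

import Mathlib

/-!
Write `X = S M̃_s⁻¹ Sᵀ A`. For an `A`-orthogonal projection `Q`, the product `X Q` has the same
nonzero eigenvalues as `M̃_s⁻¹ G_Q` with `G_Q = (Q S)ᵀ A (Q S) ⪰ 0`, and
`G_Π + G_{I-Π} = A_s ⪯ M̃_s`. Factoring `M̃_s = Bᵀ B` turns `M̃_s⁻¹ G_Π` and `M̃_s⁻¹ G_{I-Π}` into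
positive semidefinite `C` and `D` with `C + D ⪯ I`. The rank hypotheses give
`rank C + rank D ≥ n_c + (n - n_c) > n_s`, so `range C ∩ range D` contains some `x ≠ 0`.
On the range of a positive semidefinite matrix the Rayleigh quotient is at least its smallest
positive eigenvalue, hence `(λ_min⁺(C) + λ_min⁺(D)) ‖x‖² ≤ xᵀ (C + D) x ≤ ‖x‖²`.
-/

open Matrix

/-- Smallest eigenvalue (real spectrum). -/
noncomputable def lamMin {n : ℕ} (M : Matrix (Fin n) (Fin n) ℝ) : ℝ :=
  sInf (spectrum ℝ M)

/-- Largest eigenvalue (real spectrum). -/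
noncomputable def lamMax {n : ℕ} (M : Matrix (Fin n) (Fin n) ℝ) : ℝ :=
  sSup (spectrum ℝ M)

/-- Smallest positive eigenvalue (real spectrum). -/
noncomputable def lamMinPos {n : ℕ} (M : Matrix (Fin n) (Fin n) ℝ) : ℝ :=
  sInf {t : ℝ | t ∈ spectrum ℝ M ∧ 0 < t}

/-- Energy norm of a vector induced by an SPD matrix `A`. -/
noncomputable def eNorm {n : ℕ} (A : Matrix (Fin n) (Fin n) ℝ) (v : Fin n → ℝ) : ℝ :=
  Real.sqrt (v ⬝ᵥ A.mulVec v)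

/-- `A`-norm of a matrix `B`: `‖B‖_A = sup_{v ≠ 0} ‖Bv‖_A / ‖v‖_A`. -/
noncomputable def aNorm {n : ℕ} (A B : Matrix (Fin n) (Fin n) ℝ) : ℝ :=
  sSup {r : ℝ | ∃ v : Fin n → ℝ, v ≠ 0 ∧ r = eNorm A (B.mulVec v) / eNorm A v}

/-- The `A`-orthogonal projection `Π_A = P (Pᵀ A P)⁻¹ Pᵀ A`. -/
noncomputable def proj {n nc : ℕ} (A : Matrix (Fin n) (Fin n) ℝ)
    (P : Matrix (Fin n) (Fin nc) ℝ) : Matrix (Fin n) (Fin n) ℝ :=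
  P * (Pᵀ * A * P)⁻¹ * Pᵀ * A

/-- `M̃_s = Msᵀ (Ms + Msᵀ - As)⁻¹ Ms`. -/
noncomputable def tMs {ns : ℕ} (Ms As : Matrix (Fin ns) (Fin ns) ℝ) :
    Matrix (Fin ns) (Fin ns) ℝ :=
  Msᵀ * (Ms + Msᵀ - As)⁻¹ * Ms

/-- `S M̃_s⁻¹ Sᵀ A`. -/
noncomputable def smoothX {n ns : ℕ} (A : Matrix (Fin n) (Fin n) ℝ)
    (S : Matrix (Fin n) (Fin ns) ℝ) (Ms : Matrix (Fin ns) (Fin ns) ℝ) :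
    Matrix (Fin n) (Fin n) ℝ :=
  S * (tMs Ms (Sᵀ * A * S))⁻¹ * Sᵀ * A

/-- `σ_TL = λ_min⁺( S M̃_s⁻¹ Sᵀ A (I - Π_A) )`. -/
noncomputable def sigmaTL {n ns nc : ℕ} (A : Matrix (Fin n) (Fin n) ℝ)
    (S : Matrix (Fin n) (Fin ns) ℝ) (P : Matrix (Fin n) (Fin nc) ℝ)
    (Ms : Matrix (Fin ns) (Fin ns) ℝ) : ℝ :=
  lamMinPos (smoothX A S Ms * (1 - proj A P))

/-- Exact TLHB iteration matrix. -/
noncomputable def Etl {n ns nc : ℕ} (A : Matrix (Fin n) (Fin n) ℝ)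
    (S : Matrix (Fin n) (Fin ns) ℝ) (P : Matrix (Fin n) (Fin nc) ℝ)
    (Ms : Matrix (Fin ns) (Fin ns) ℝ) : Matrix (Fin n) (Fin n) ℝ :=
  (1 - S * (Msᵀ)⁻¹ * Sᵀ * A) * (1 - proj A P) * (1 - S * Ms⁻¹ * Sᵀ * A)

/-- Inexact TLHB iteration matrix with coarse solver `Bc`. -/
noncomputable def EtlIn {n ns nc : ℕ} (A : Matrix (Fin n) (Fin n) ℝ)
    (S : Matrix (Fin n) (Fin ns) ℝ) (P : Matrix (Fin n) (Fin nc) ℝ)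
    (Ms : Matrix (Fin ns) (Fin ns) ℝ) (Bc : Matrix (Fin nc) (Fin nc) ℝ) :
    Matrix (Fin n) (Fin n) ℝ :=
  (1 - S * (Msᵀ)⁻¹ * Sᵀ * A) * (1 - P * Bc⁻¹ * Pᵀ * A) * (1 - S * Ms⁻¹ * Sᵀ * A)

namespace Matrix

section Field

variable {K : Type*} [Field K] {m n : Type*} [Fintype m] [DecidableEq m] [Fintype n] [DecidableEq n]

theorem mem_spectrum_iff_exists_mulVec_eq_smul {M : Matrix n n K} {c : K} :
    c ∈ spectrum K M ↔ ∃ v ≠ 0, M *ᵥ v = c • v := by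
  rw [← spectrum_toLin', ← Module.End.hasEigenvalue_iff_mem_spectrum]
  constructor
  · intro h
    obtain ⟨v, hv⟩ := h.exists_hasEigenvector
    exact ⟨v, hv.2, by simpa using hv.apply_eq_smul⟩
  · rintro ⟨v, hv0, hv⟩
    exact Module.End.hasEigenvalue_of_hasEigenvector
      ⟨Module.End.mem_eigenspace_iff.mpr (by simpa using hv), hv0⟩

theorem mem_spectrum_mul_comm_of_ne_zero (M : Matrix m n K) (N : Matrix n m K) {c : K}
    (hc : c ≠ 0) : c ∈ spectrum K (M * N) → c ∈ spectrum K (N * M) := by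
  simp only [mem_spectrum_iff_exists_mulVec_eq_smul]
  rintro ⟨v, hv0, hv⟩
  refine ⟨N *ᵥ v, fun h ↦ hv0 ?_, ?_⟩
  · rwa [← mulVec_mulVec, h, mulVec_zero, eq_comm, smul_eq_zero_iff_right hc] at hv
  · rw [mulVec_mulVec, Matrix.mul_assoc, ← mulVec_mulVec, hv, mulVec_smul]

omit [Fintype m] [DecidableEq m] [DecidableEq n]

theorem rank_add_le (M N : Matrix m n K) : (M + N).rank ≤ M.rank + N.rank := by
  unfold rank
  rw [mulVecLin_add]
  exact (Submodule.finrank_mono (LinearMap.range_add_le _ _)).trans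
    (Submodule.finrank_add_le_finrank_add_finrank _ _)

theorem mulVec_injective_of_rank_eq_card {M : Matrix m n K} (h : M.rank = Fintype.card n) :
    Function.Injective M.mulVec := by
  have hdim := LinearMap.finrank_range_add_finrank_ker M.mulVecLin
  rw [Module.finrank_fintype_fun_eq_card, ← rank, h] at hdim
  have hker : LinearMap.ker M.mulVecLin = ⊥ := Submodule.finrank_eq_zero.mp (by omega)
  exact LinearMap.ker_eq_bot.mp hker

end Field

theorem transpose_mul_mul_of_isIdempotentElem {R : Type*} [CommRing R] {m n : Type*}
    [Fintype m] [Fintype n] {A Q : Matrix n n R} (hQ : IsIdempotentElem Q)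
    (hQA : Qᵀ * A = A * Q) (S : Matrix n m R) :
    (Q * S)ᵀ * A * (Q * S) = Sᵀ * A * Q * S := by
  calc (Q * S)ᵀ * A * (Q * S) = Sᵀ * (Qᵀ * A * Q) * S := by
        simp only [transpose_mul, Matrix.mul_assoc]
    _ = Sᵀ * A * Q * S := by rw [hQA, Matrix.mul_assoc A, hQ.eq, ← Matrix.mul_assoc]

variable {m n : Type*} [Fintype m] [Fintype n]

theorem PosSemidef.transpose_mul_mul_same {A : Matrix m m ℝ} (hA : A.PosSemidef)
    (B : Matrix m n ℝ) : (Bᵀ * A * B).PosSemidef := by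
  simpa using hA.conjTranspose_mul_mul_same B

theorem PosDef.exists_isUnit_det_eq_transpose_mul_self [DecidableEq m] {M : Matrix m m ℝ}
    (hM : M.PosDef) : ∃ B : Matrix m m ℝ, IsUnit B.det ∧ M = Bᵀ * B := by
  open scoped MatrixOrder in
  obtain ⟨B, hB⟩ := CStarAlgebra.nonneg_iff_eq_star_mul_self.mp hM.posSemidef.nonneg
  rw [star_eq_conjTranspose, conjTranspose_eq_transpose_of_trivial] at hB
  refine ⟨B, ?_, hB⟩
  have h := hM.det_pos
  rw [hB, det_mul, det_transpose] at h
  exact isUnit_iff_ne_zero.mpr fun h0 ↦ by simp [h0] at h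

theorem rank_transpose_mul_mul_of_posDef [DecidableEq m] {H : Matrix m m ℝ} (hH : H.PosDef)
    (N : Matrix m n ℝ) : (Nᵀ * H * N).rank = N.rank := by
  obtain ⟨B, hB, rfl⟩ := hH.exists_isUnit_det_eq_transpose_mul_self
  rw [show Nᵀ * (Bᵀ * B) * N = (B * N)ᵀ * (B * N) by simp only [transpose_mul, Matrix.mul_assoc],
    rank_transpose_mul_self, rank_mul_eq_right_of_isUnit_det _ _ hB]

end Matrix

theorem Submodule.exists_ne_zero_mem_inf_of_finrank_lt {K V : Type*} [Field K] [AddCommGroup V]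
    [Module K V] [FiniteDimensional K V] {U W : Submodule K V}
    (h : Module.finrank K V < Module.finrank K U + Module.finrank K W) :
    ∃ x ≠ 0, x ∈ U ∧ x ∈ W := by
  by_contra! hUW
  refine (Submodule.finrank_add_finrank_le_of_disjoint ?_).not_gt h
  exact Submodule.disjoint_def.mpr fun x hxU hxW ↦ by_contra fun hx ↦ hUW x hx hxU hxW

theorem lamMinPos_mul_comm {a b : ℕ} (M : Matrix (Fin a) (Fin b) ℝ) (N : Matrix (Fin b) (Fin a) ℝ) :
    lamMinPos (M * N) = lamMinPos (N * M) := by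
  unfold lamMinPos
  congr 1
  ext t
  exact and_congr_left fun ht ↦
    ⟨mem_spectrum_mul_comm_of_ne_zero M N ht.ne', mem_spectrum_mul_comm_of_ne_zero N M ht.ne'⟩

open scoped MatrixOrder in
theorem Matrix.PosSemidef.posSemidef_mul_mul_sub_lamMinPos {m : ℕ} {M : Matrix (Fin m) (Fin m) ℝ}
    (hM : M.PosSemidef) : (M * M * M - lamMinPos M • (M * M)).PosSemidef := by
  have hsa : IsSelfAdjoint M := hM.isHermitian
  have hcfc : M * M * M - lamMinPos M • (M * M) =
      cfc (fun t : ℝ ↦ t * t * t - lamMinPos M * (t * t)) M := by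
    rw [cfc_sub _ _ M, cfc_mul _ _ M, cfc_mul _ _ M, cfc_const_mul _ _ M, cfc_mul _ _ M,
      cfc_id' ℝ M]
  rw [hcfc, ← nonneg_iff_posSemidef]
  refine cfc_nonneg fun t ht ↦ ?_
  rcases (spectrum_nonneg_of_nonneg hM.nonneg ht).eq_or_lt with rfl | htpos
  · simp
  · have : lamMinPos M ≤ t := csInf_le ⟨0, fun s hs ↦ hs.2.le⟩ ⟨ht, htpos⟩
    nlinarith

theorem Matrix.PosSemidef.lamMinPos_mul_dotProduct_self_le {m : ℕ} {M : Matrix (Fin m) (Fin m) ℝ}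
    (hM : M.PosSemidef) {x : Fin m → ℝ} (hx : x ∈ LinearMap.range M.mulVecLin) :
    lamMinPos M * (x ⬝ᵥ x) ≤ x ⬝ᵥ M *ᵥ x := by
  -- with `x = M y` the claim is `yᵀ (M³ - λ_min⁺(M) M²) y ≥ 0`
  obtain ⟨y, rfl⟩ := hx
  have hMt : Mᵀ = M := hM.isHermitian.eq
  have hsymm : ∀ z w : Fin m → ℝ, z ⬝ᵥ M *ᵥ w = M *ᵥ z ⬝ᵥ w := fun z w ↦ by
    rw [dotProduct_mulVec, ← mulVec_transpose, hMt]
  have h := hM.posSemidef_mul_mul_sub_lamMinPos.dotProduct_mulVec_nonneg y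
  simp only [star_trivial, sub_mulVec, smul_mulVec, dotProduct_sub, dotProduct_smul,
    smul_eq_mul, mulVecLin_apply] at h ⊢
  rw [← mulVec_mulVec, ← mulVec_mulVec, ← mulVec_mulVec, hsymm, hsymm y] at h
  linarith

theorem lamMinPos_add_lamMinPos_le_one {m : ℕ} {C D : Matrix (Fin m) (Fin m) ℝ}
    (hC : C.PosSemidef) (hD : D.PosSemidef) (hCD : (1 - (C + D)).PosSemidef)
    (hrank : m < C.rank + D.rank) : lamMinPos C + lamMinPos D ≤ 1 := by
  obtain ⟨x, hx0, hxC, hxD⟩ :=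
    Submodule.exists_ne_zero_mem_inf_of_finrank_lt (U := LinearMap.range C.mulVecLin)
      (W := LinearMap.range D.mulVecLin) (by rw [Module.finrank_fin_fun]; exact hrank)
  have hxx : 0 < x ⬝ᵥ x := by simpa using dotProduct_self_star_pos_iff.mpr hx0
  have h := hCD.dotProduct_mulVec_nonneg x
  simp only [star_trivial, sub_mulVec, add_mulVec, one_mulVec, dotProduct_sub,
    dotProduct_add] at h
  have hCx := hC.lamMinPos_mul_dotProduct_self_le hxC
  have hDx := hD.lamMinPos_mul_dotProduct_self_le hxD
  nlinarith

theorem lamMinPos_inv_mul_add_lamMinPos_inv_mul_le_one {m : ℕ}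
    {M G₁ G₂ : Matrix (Fin m) (Fin m) ℝ} (hM : M.PosDef) (hG₁ : G₁.PosSemidef)
    (hG₂ : G₂.PosSemidef) (hMG : (M - (G₁ + G₂)).PosSemidef) (hrank : m < G₁.rank + G₂.rank) :
    lamMinPos (M⁻¹ * G₁) + lamMinPos (M⁻¹ * G₂) ≤ 1 := by
  obtain ⟨B, hB, rfl⟩ := hM.exists_isUnit_det_eq_transpose_mul_self
  have hspec : ∀ G, lamMinPos ((Bᵀ * B)⁻¹ * G) = lamMinPos ((B⁻¹)ᵀ * G * B⁻¹) := fun G ↦ by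
    rw [Matrix.mul_inv_rev, ← transpose_nonsing_inv, Matrix.mul_assoc, lamMinPos_mul_comm]
  have hrk : ∀ G, ((B⁻¹)ᵀ * G * B⁻¹).rank = G.rank := fun G ↦ by
    rw [rank_mul_eq_left_of_isUnit_det _ _ (isUnit_nonsing_inv_det B hB),
      rank_mul_eq_right_of_isUnit_det _ _
        (by rw [det_transpose]; exact isUnit_nonsing_inv_det B hB)]
  have hone : (B⁻¹)ᵀ * (Bᵀ * B) * B⁻¹ = 1 := by
    rw [← Matrix.mul_assoc, ← transpose_mul, mul_nonsing_inv _ hB, transpose_one, Matrix.one_mul,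
      mul_nonsing_inv _ hB]
  rw [hspec, hspec]
  refine lamMinPos_add_lamMinPos_le_one (hG₁.transpose_mul_mul_same _)
    (hG₂.transpose_mul_mul_same _) ?_ (by rwa [hrk, hrk])
  rw [← hone, ← Matrix.add_mul, ← Matrix.mul_add, ← Matrix.sub_mul, ← Matrix.mul_sub]
  exact hMG.transpose_mul_mul_same _

section TwoLevel

variable {n nc ns : ℕ}

theorem posDef_tMs {Ms As : Matrix (Fin ns) (Fin ns) ℝ} (hMs : IsUnit Ms.det)
    (hW : (Ms + Msᵀ - As).PosDef) : (tMs Ms As).PosDef := by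
  simpa [tMs] using hW.inv.conjTranspose_mul_mul_same
    (mulVec_injective_iff_isUnit.mpr ((isUnit_iff_isUnit_det Ms).mpr hMs))

theorem posSemidef_tMs_sub {Ms As : Matrix (Fin ns) (Fin ns) ℝ}
    (hW : (Ms + Msᵀ - As).PosDef) : (tMs Ms As - As).PosSemidef := by
  rw [tMs]
  generalize hWdef : Ms + Msᵀ - As = W at hW ⊢
  have hWt : Wᵀ = W := hW.isHermitian.eq
  have hWu : IsUnit W.det := hW.isUnit.map detMonoidHom
  have hAs : As = Ms + Msᵀ - W := by rw [← hWdef]; abel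
  have hid : Msᵀ * W⁻¹ * Ms - As = (Ms - W)ᵀ * W⁻¹ * (Ms - W) := by
    rw [transpose_sub, hWt, hAs]
    simp only [Matrix.sub_mul, Matrix.mul_sub, nonsing_inv_mul_cancel_right _ _ hWu,
      mul_nonsing_inv _ hWu, Matrix.one_mul]
    abel
  rw [hid]
  exact hW.inv.posSemidef.transpose_mul_mul_same _

variable {A : Matrix (Fin n) (Fin n) ℝ} {P : Matrix (Fin n) (Fin nc) ℝ}

theorem isUnit_det_transpose_mul_mul (hA : A.PosDef) (hP : P.rank = nc) :
    IsUnit (Pᵀ * A * P).det := by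
  have hPA := hA.conjTranspose_mul_mul_same
    (mulVec_injective_of_rank_eq_card (by rwa [Fintype.card_fin]) : Function.Injective P.mulVec)
  simpa using hPA.isUnit.map detMonoidHom

theorem proj_mul_eq_right (hAc : IsUnit (Pᵀ * A * P).det) : proj A P * P = P := by
  calc proj A P * P = P * ((Pᵀ * A * P)⁻¹ * (Pᵀ * A * P)) := by simp only [proj, Matrix.mul_assoc]
    _ = P := by rw [nonsing_inv_mul _ hAc, Matrix.mul_one]

theorem transpose_mul_mul_proj (hAc : IsUnit (Pᵀ * A * P).det) :
    Pᵀ * A * proj A P = Pᵀ * A := by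
  calc Pᵀ * A * proj A P = (Pᵀ * A * P) * (Pᵀ * A * P)⁻¹ * (Pᵀ * A) := by
        simp only [proj, Matrix.mul_assoc]
    _ = Pᵀ * A := by rw [mul_nonsing_inv _ hAc, Matrix.one_mul]

theorem isIdempotentElem_proj (hAc : IsUnit (Pᵀ * A * P).det) : IsIdempotentElem (proj A P) := by
  calc proj A P * proj A P = proj A P * P * ((Pᵀ * A * P)⁻¹ * Pᵀ * A) := by
        simp only [proj, Matrix.mul_assoc]
    _ = proj A P := by rw [proj_mul_eq_right hAc]; simp only [proj, Matrix.mul_assoc]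

theorem transpose_proj_mul (hA : Aᵀ = A) : (proj A P)ᵀ * A = A * proj A P := by
  simp only [proj, transpose_mul, transpose_nonsing_inv, hA, transpose_transpose,
    Matrix.mul_assoc]

theorem rank_transpose_mul_mul_le_rank_proj_mul (hA : Aᵀ = A) (hAc : IsUnit (Pᵀ * A * P).det)
    (S : Matrix (Fin n) (Fin ns) ℝ) : (Sᵀ * A * P).rank ≤ (proj A P * S).rank := by
  calc (Sᵀ * A * P).rank = (Pᵀ * A * proj A P * S).rank := by
        rw [← rank_transpose, transpose_mul_mul_proj hAc]
        simp [hA, Matrix.mul_assoc]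
    _ ≤ (proj A P * S).rank := by rw [Matrix.mul_assoc]; exact rank_mul_le_right _ _

theorem rank_fromCols_le_add_rank_one_sub_proj_mul (hAc : IsUnit (Pᵀ * A * P).det)
    (S : Matrix (Fin n) (Fin ns) ℝ) :
    (fromCols S P).rank ≤ nc + ((1 - proj A P) * S).rank := by
  have hsplit : proj A P * fromCols S P + (1 - proj A P) * fromCols S P = fromCols S P := by
    rw [← Matrix.add_mul, add_sub_cancel, Matrix.one_mul]
  have hrange : (proj A P * fromCols S P).rank ≤ nc := by
    calc (proj A P * fromCols S P).rank
        = (P * ((Pᵀ * A * P)⁻¹ * Pᵀ * A * fromCols S P)).rank := by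
          simp only [proj, Matrix.mul_assoc]
      _ ≤ nc := (rank_mul_le_left _ _).trans (rank_le_width P)
  have hkernel : ((1 - proj A P) * fromCols S P).rank ≤ ((1 - proj A P) * S).rank := by
    rw [mul_fromCols, (by rw [Matrix.sub_mul, Matrix.one_mul, proj_mul_eq_right hAc, sub_self] :
        (1 - proj A P) * P = 0),
      show fromCols ((1 - proj A P) * S) (0 : Matrix (Fin n) (Fin nc) ℝ)
          = (1 - proj A P) * S * fromCols (1 : Matrix (Fin ns) (Fin ns) ℝ) (0 : Matrix _ (Fin nc) ℝ)
        by rw [mul_fromCols, Matrix.mul_one, Matrix.mul_zero]]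
    exact rank_mul_le_left _ _
  rw [← hsplit]
  exact (Matrix.rank_add_le _ _).trans (add_le_add hrange hkernel)

theorem lamMinPos_smoothX_mul (S : Matrix (Fin n) (Fin ns) ℝ) (Ms : Matrix (Fin ns) (Fin ns) ℝ)
    (Q : Matrix (Fin n) (Fin n) ℝ) :
    lamMinPos (smoothX A S Ms * Q) = lamMinPos ((tMs Ms (Sᵀ * A * S))⁻¹ * (Sᵀ * A * Q * S)) := by
  rw [show smoothX A S Ms * Q = S * ((tMs Ms (Sᵀ * A * S))⁻¹ * Sᵀ * A * Q) by
    simp only [smoothX, Matrix.mul_assoc], lamMinPos_mul_comm]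
  simp only [Matrix.mul_assoc]

end TwoLevel

theorem one_sub_lamMinPos_ge_sigma_general {n ns nc : ℕ}
    (A : Matrix (Fin n) (Fin n) ℝ) (hA : A.PosDef)
    (S : Matrix (Fin n) (Fin ns) ℝ)
    (P : Matrix (Fin n) (Fin nc) ℝ) (hP : P.rank = nc)
    (hns : ns < n)
    (hSP : (fromCols S P).rank = n)
    (Ms : Matrix (Fin ns) (Fin ns) ℝ) (hMs : IsUnit Ms.det)
    (hMsA : (Ms + Msᵀ - Sᵀ * A * S).PosDef)
    (hr : (Sᵀ * A * P).rank = nc) :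
    sigmaTL A S P Ms ≤ 1 - lamMinPos (smoothX A S Ms * proj A P) := by
  have hAt : Aᵀ = A := hA.isHermitian.eq
  have hAc := isUnit_det_transpose_mul_mul hA hP
  have hQA : (proj A P)ᵀ * A = A * proj A P := transpose_proj_mul hAt
  have hG := transpose_mul_mul_of_isIdempotentElem (isIdempotentElem_proj hAc) hQA S
  have hQA' : (1 - proj A P)ᵀ * A = A * (1 - proj A P) := by
    rw [transpose_sub, transpose_one, Matrix.sub_mul, Matrix.mul_sub, hQA, Matrix.one_mul,
      Matrix.mul_one]
  have hG' := transpose_mul_mul_of_isIdempotentElem (isIdempotentElem_proj hAc).one_sub hQA' S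
  have hrank : ns < (proj A P * S).rank + ((1 - proj A P) * S).rank := by
    have := rank_transpose_mul_mul_le_rank_proj_mul hAt hAc S
    have := rank_fromCols_le_add_rank_one_sub_proj_mul hAc S
    omega
  have key := lamMinPos_inv_mul_add_lamMinPos_inv_mul_le_one (posDef_tMs hMs hMsA)
    (hA.posSemidef.transpose_mul_mul_same (proj A P * S))
    (hA.posSemidef.transpose_mul_mul_same ((1 - proj A P) * S))
    (by rw [hG, hG', ← Matrix.add_mul, ← Matrix.mul_add, add_sub_cancel, Matrix.mul_one]
        exact posSemidef_tMs_sub hMsA)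
    (by rwa [rank_transpose_mul_mul_of_posDef hA, rank_transpose_mul_mul_of_posDef hA])
  rw [sigmaTL, lamMinPos_smoothX_mul, lamMinPos_smoothX_mul, ← hG, ← hG']
  linarith

/-- If `rank(Sᵀ A P) = n_c`, then `1 - λ_min⁺(S M̃_s⁻¹ Sᵀ A Π_A) ≥ σ_TL`. -/
theorem one_sub_lamMinPos_ge_sigma {n ns nc : ℕ}
    (A : Matrix (Fin n) (Fin n) ℝ) (hA : A.PosDef)
    (S : Matrix (Fin n) (Fin ns) ℝ) (hS : S.rank = ns)
    (P : Matrix (Fin n) (Fin nc) ℝ) (hP : P.rank = nc)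
    (hns : ns < n) (hnc : nc < n) (hsum : n ≤ ns + nc)
    (hSP : (fromCols S P).rank = n)
    (Ms : Matrix (Fin ns) (Fin ns) ℝ) (hMs : IsUnit Ms.det)
    (hMsA : (Ms + Msᵀ - Sᵀ * A * S).PosDef)
    (hr : (Sᵀ * A * P).rank = nc) :
    sigmaTL A S P Ms ≤ 1 - lamMinPos (smoothX A S Ms * proj A P) :=
  one_sub_lamMinPos_ge_sigma_general A hA S P hP hns hSP Ms hMs hMsA hr
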